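/- arXiv:math/0701375 — 5 statements merged into one kernel-verified Lean document; each statement's English description precedes it below -/
import Mathlib

section
/- Let p be a prime with p ≠ 3, let q = p^r, let m ≥ 1, let a, b ∈ 𝔽_q with a ≠ b, and let β ∈ 𝔽_{q^m}. Then the number of triples (x, y, z) ∈ 𝔽_{q^m}³ satisfying y^q − y = x + a(β + x³) and z^q − z = x + b(β + x³) equals q^m + Σ_{v ∈ 𝔽_q^*} e(vβ) · Σ_{u ∈ 𝔽_q} S₃^{(m)}(u, v). (This count is one less than the number N_{m,3}(β) of rational places of the fibre product L_{m,3,β} = 𝔽_{q^m}(x, y_a, y_b) of the two Artin–Schreier curves.) -/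
open Finset

/-- The canonical additive character of a finite field `E` of characteristic `p`:
`e(x) = exp(2πi · Tr_{E/𝔽_p}(x) / p)`. -/
noncomputable def addChar (p : ℕ) (E : Type) [Field E] [Fintype E] [Algebra (ZMod p) E]
    (x : E) : ℂ :=
  Complex.exp (2 * Real.pi * Complex.I * ((Algebra.trace (ZMod p) E x).val : ℂ) / p)

/-- The cubic exponential sum `S₃^{(m)}(u,v) = Σ_{z ∈ 𝔽_{q^m}} e(uz + vz³)` for `u, v ∈ 𝔽_q`. -/
noncomputable def S3 (p : ℕ) (F E : Type) [Field F] [Fintype F] [Field E] [Fintype E]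
    [Algebra (ZMod p) E] [Algebra F E] (u v : F) : ℂ :=
  ∑ z : E, addChar p E (algebraMap F E u * z + algebraMap F E v * z ^ 3)

/-!
The fibre of the Artin–Schreier map `y ↦ y ^ q - y` of `𝔽_{q^m}` over `w` has at most `q`
points, and it is empty unless `e(v w) = 1` for all `v ∈ 𝔽_q`, because the absolute trace is
invariant under Frobenius. Hence the fibre size is bounded by `∑_{v ∈ 𝔽_q} e(v w) ∈ {0, q}`, and
as both sides sum to `q ^ m` over `w`, they are equal. Multiplying the two fibre counts over each
`x` gives a double sum over `(v₁, v₂) ∈ 𝔽_q²`; the substitution `(u, v) = (v₁ + v₂, v₁ a + v₂ b)`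
is invertible as `a ≠ b`, and the terms with `v = 0` contribute exactly `q ^ m`.
-/

theorem card_pow_sub_self_eq_le {K : Type*} [Field K] [Fintype K] {n : ℕ} (hn : 1 < n) (w : K) :
    Nat.card {y : K // y ^ n - y = w} ≤ n := by
  classical
  set P : Polynomial K := Polynomial.X ^ n - Polynomial.X - Polynomial.C w
  have hP : P.natDegree = n := by
    rw [Polynomial.natDegree_sub_C, FiniteField.X_pow_card_sub_X_natDegree_eq K hn]
  have hP0 : P ≠ 0 := Polynomial.ne_zero_of_natDegree_gt (hP ▸ hn)
  rw [Nat.card_eq_fintype_card, Fintype.card_subtype]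
  refine (Polynomial.card_le_degree_of_subset_roots fun y hy => ?_).trans_eq hP
  rw [Finset.mem_val, Finset.mem_filter] at hy
  rw [Polynomial.mem_roots hP0, Polynomial.IsRoot.def]
  simp [P, hy.2]

theorem card_subtype_and_eq_sum {α β γ : Type*} [Fintype α] [Fintype β] [Fintype γ]
    (P : α → β → Prop) (Q : α → γ → Prop) :
    Nat.card {t : α × β × γ // P t.1 t.2.1 ∧ Q t.1 t.2.2} =
      ∑ x, Nat.card {y // P x y} * Nat.card {z // Q x z} := by
  classical
  let e : {t : α × β × γ // P t.1 t.2.1 ∧ Q t.1 t.2.2} ≃ Σ x, {y // P x y} × {z // Q x z} :=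
    { toFun := fun t => ⟨t.1.1, ⟨t.1.2.1, t.2.1⟩, ⟨t.1.2.2, t.2.2⟩⟩
      invFun := fun s => ⟨⟨s.1, s.2.1.1, s.2.2.1⟩, s.2.1.2, s.2.2.2⟩
      left_inv := fun _ => rfl
      right_inv := fun _ => rfl }
  simp only [Nat.card_congr e, Nat.card_eq_fintype_card, Fintype.card_sigma, Fintype.card_prod]

theorem sum_sum_comp_add_mul_add_mul {F M : Type*} [Field F] [Fintype F] [AddCommMonoid M]
    {a b : F} (hab : a ≠ b) (f : F → F → M) :
    ∑ v₁, ∑ v₂, f (v₁ + v₂) (v₁ * a + v₂ * b) = ∑ u, ∑ v, f u v := by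
  simp only [← Fintype.sum_prod_type']
  refine Fintype.sum_bijective (fun v => (v.1 + v.2, v.1 * a + v.2 * b)) ?_ _ _ fun _ => rfl
  refine (Finite.injective_iff_bijective).1 fun v w h => ?_
  obtain ⟨hsum, hlin⟩ := Prod.mk.inj h
  have hd : (v.1 - w.1) * (a - b) = 0 := by linear_combination hlin - b * hsum
  have h₁ : v.1 = w.1 := sub_eq_zero.1 ((mul_eq_zero.1 hd).resolve_right (sub_ne_zero.2 hab))
  exact Prod.ext h₁ (by linear_combination hsum - h₁)

theorem trace_pow_card {p : ℕ} {F E : Type*} [Field F] [Fintype F] [Field E] [Fintype E]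
    [Algebra (ZMod p) E] [Algebra F E] (x : E) :
    Algebra.trace (ZMod p) E (x ^ Fintype.card F) = Algebra.trace (ZMod p) E x := by
  let σ := (FiniteField.frobeniusAlgEquivOfAlgebraic F E).toRingEquiv
  have hσ : ∀ c : ZMod p, σ (algebraMap (ZMod p) E c) = algebraMap (ZMod p) E c := fun c =>
    DFunLike.congr_fun (RingHom.ext_zmod (σ.toRingHom.comp (algebraMap (ZMod p) E)) _) c
  exact Algebra.trace_eq_of_algEquiv (AlgEquiv.ofRingEquiv hσ) x

section Character

variable (p : ℕ) [Fact p.Prime] (E : Type) [Field E] [Fintype E] [Algebra (ZMod p) E]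

noncomputable def traceChar : AddChar E ℂ :=
  ZMod.stdAddChar.compAddMonoidHom (Algebra.trace (ZMod p) E).toAddMonoidHom

theorem traceChar_apply (x : E) : traceChar p E x = addChar p E x := by
  rw [traceChar, AddChar.compAddMonoidHom_apply, ZMod.stdAddChar_apply, ZMod.toCircle_apply,
    addChar]
  rfl

theorem isPrimitive_traceChar : (traceChar p E).IsPrimitive := by
  refine AddChar.IsPrimitive.of_ne_one fun h => ?_
  obtain ⟨x, hx⟩ := Algebra.trace_surjective (ZMod p) E 1
  have := DFunLike.congr_fun h x
  rw [traceChar, AddChar.compAddMonoidHom_apply, AddChar.one_apply] at this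
  simp only [LinearMap.toAddMonoidHom_coe, hx] at this
  exact one_ne_zero (ZMod.injective_stdAddChar (this.trans (AddChar.map_zero_eq_one _).symm))

variable {p E}

theorem addChar_add (x y : E) : addChar p E (x + y) = addChar p E x * addChar p E y := by
  simp only [← traceChar_apply, AddChar.map_add_eq_mul]

theorem sum_addChar_mul [DecidableEq E] (c : E) :
    ∑ x : E, addChar p E (c * x) = if c = 0 then (Fintype.card E : ℂ) else 0 := by
  simp only [← traceChar_apply, mul_comm c]
  exact_mod_cast AddChar.sum_mulShift c (isPrimitive_traceChar p E)

theorem addChar_algebraMap_mul_pow_card_sub {F : Type*} [Field F] [Fintype F] [Algebra F E]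
    (v : F) (y : E) :
    addChar p E (algebraMap F E v * (y ^ Fintype.card F - y)) = 1 := by
  have hv : algebraMap F E v ^ Fintype.card F = algebraMap F E v := by
    rw [← map_pow, FiniteField.pow_card]
  have hfrob : algebraMap F E v * (y ^ Fintype.card F - y) =
      (algebraMap F E v * y) ^ Fintype.card F - algebraMap F E v * y := by
    rw [mul_pow, hv, mul_sub]
  rw [hfrob, ← traceChar_apply, traceChar, AddChar.compAddMonoidHom_apply]
  simp [trace_pow_card]

theorem sum_sum_addChar_algebraMap_mul {F : Type*} [Field F] [Fintype F] [Algebra F E] :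
    ∑ w : E, ∑ v : F, addChar p E (algebraMap F E v * w) = Fintype.card E := by
  classical
  rw [Finset.sum_comm]
  simp [sum_addChar_mul]

theorem card_pow_card_sub_self_eq_sum_addChar {F : Type*} [Field F] [Fintype F] [Algebra F E]
    (w : E) :
    (Nat.card {y : E // y ^ Fintype.card F - y = w} : ℂ) =
      ∑ v : F, addChar p E (algebraMap F E v * w) := by
  classical
  let χ : E → AddChar F ℂ := fun w =>
    ((traceChar p E).mulShift w).compAddMonoidHom (algebraMap F E).toAddMonoidHom
  have hχ : ∀ w v, χ w v = addChar p E (algebraMap F E v * w) := fun w v => by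
    simp [χ, mul_comm, traceChar_apply]
  have hsum : ∀ w, ∑ v : F, addChar p E (algebraMap F E v * w) =
      ((if χ w = 0 then Fintype.card F else 0 : ℕ) : ℂ) := fun w => by
    simp_rw [← hχ, AddChar.sum_eq_ite, Nat.cast_ite, Nat.cast_zero]
  have hle : ∀ w, Nat.card {y : E // y ^ Fintype.card F - y = w} ≤
      if χ w = 0 then Fintype.card F else 0 := fun w => by
    split_ifs with h
    · exact card_pow_sub_self_eq_le Fintype.one_lt_card w
    · refine (Nat.card_eq_zero.2 (Or.inl ⟨fun y => h ?_⟩)).le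
      refine AddChar.eq_zero_iff.2 fun v => ?_
      rw [hχ, ← y.2, addChar_algebraMap_mul_pow_card_sub]
  have htotal : ∑ w, Nat.card {y : E // y ^ Fintype.card F - y = w} =
      ∑ w, if χ w = 0 then Fintype.card F else 0 := by
    have hfibres : ∑ w, Nat.card {y : E // y ^ Fintype.card F - y = w} = Fintype.card E := by
      simp only [Nat.card_eq_fintype_card, Fintype.card_subtype]
      exact (Finset.card_eq_sum_card_fiberwise fun y _ => Finset.mem_univ _).symm
    refine hfibres.trans (Nat.cast_injective (R := ℂ) ?_)
    rw [Nat.cast_sum, ← sum_sum_addChar_algebraMap_mul (p := p) (F := F)]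
    exact Finset.sum_congr rfl fun w _ => hsum w
  rw [(Finset.sum_eq_sum_iff_of_le fun w _ => hle w).1 htotal w (Finset.mem_univ w), hsum]

theorem card_pow_card_sub_pair_eq_sum {F : Type*} [Field F] [Fintype F] [Algebra F E]
    (A B : E → E) :
    (Nat.card {t : E × E × E //
        t.2.1 ^ Fintype.card F - t.2.1 = A t.1 ∧ t.2.2 ^ Fintype.card F - t.2.2 = B t.1} : ℂ) =
      ∑ v₁ : F, ∑ v₂ : F, ∑ x : E,
        addChar p E (algebraMap F E v₁ * A x + algebraMap F E v₂ * B x) := by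
  rw [card_subtype_and_eq_sum (fun x y => y ^ Fintype.card F - y = A x)
    (fun x z => z ^ Fintype.card F - z = B x)]
  push_cast
  simp_rw [card_pow_card_sub_self_eq_sum_addChar (p := p), Finset.sum_mul_sum, ← addChar_add]
  rw [Finset.sum_comm]
  exact Finset.sum_congr rfl fun _ _ => Finset.sum_comm

theorem sum_addChar_cubic_eq_mul_S3 {F : Type} [Field F] [Fintype F] [Algebra F E]
    (β : E) (u v : F) :
    ∑ x : E, addChar p E (algebraMap F E u * x + algebraMap F E v * (β + x ^ 3)) =
      addChar p E (algebraMap F E v * β) * S3 p F E u v := by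
  rw [S3, Finset.mul_sum]
  refine Finset.sum_congr rfl fun x _ => ?_
  rw [← addChar_add]
  ring_nf

theorem sum_S3_zero {F : Type} [Field F] [Fintype F] [Algebra F E] :
    ∑ u : F, S3 p F E u 0 = Fintype.card E := by
  rw [← sum_sum_addChar_algebraMap_mul (p := p) (F := F), Finset.sum_comm]
  simp [S3]

end Character

theorem affine_count_fibre_product_cubic_general
    (p r m : ℕ) (hp : p.Prime)
    (F E : Type) [Field F] [Fintype F] [DecidableEq F] [Field E] [Fintype E]
    [Algebra (ZMod p) E] [Algebra F E]
    (hF : Fintype.card F = p ^ r) (hE : Fintype.card E = (p ^ r) ^ m)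
    (a b : F) (hab : a ≠ b) (β : E) :
    (Nat.card {t : E × E × E //
        t.2.1 ^ (p ^ r) - t.2.1 = t.1 + algebraMap F E a * (β + t.1 ^ 3) ∧
        t.2.2 ^ (p ^ r) - t.2.2 = t.1 + algebraMap F E b * (β + t.1 ^ 3)} : ℂ) =
      ((p : ℂ) ^ r) ^ m +
        ∑ v ∈ Finset.univ.filter (fun v : F => v ≠ 0),
          addChar p E (algebraMap F E v * β) * ∑ u : F, S3 p F E u v := by
  have : Fact p.Prime := ⟨hp⟩
  let f : F → F → ℂ := fun u v =>
    ∑ x : E, addChar p E (algebraMap F E u * x + algebraMap F E v * (β + x ^ 3))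
  rw [← hF]
  calc _ = ∑ v₁ : F, ∑ v₂ : F, ∑ x : E,
        addChar p E (algebraMap F E v₁ * (x + algebraMap F E a * (β + x ^ 3)) +
          algebraMap F E v₂ * (x + algebraMap F E b * (β + x ^ 3))) :=
        card_pow_card_sub_pair_eq_sum _ _
    _ = ∑ v₁ : F, ∑ v₂ : F, f (v₁ + v₂) (v₁ * a + v₂ * b) := by
        refine Finset.sum_congr rfl fun v₁ _ => Finset.sum_congr rfl fun v₂ _ =>
          Finset.sum_congr rfl fun x _ => congrArg (addChar p E) ?_
        simp only [map_add, map_mul]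
        ring
    _ = ∑ u : F, ∑ v : F, f u v := sum_sum_comp_add_mul_add_mul hab f
    _ = ∑ v : F, addChar p E (algebraMap F E v * β) * ∑ u : F, S3 p F E u v := by
        simp_rw [f, sum_addChar_cubic_eq_mul_S3, Finset.mul_sum]
        exact Finset.sum_comm
    _ = _ := by
        rw [Finset.filter_ne', ← Finset.add_sum_erase _ _ (Finset.mem_univ 0), sum_S3_zero, hE]
        simp [← traceChar_apply]

/-- Let `p ≠ 3` be a prime, `q = p^r`, `m ≥ 1`, `a ≠ b` in `𝔽_q`, and `β ∈ 𝔽_{q^m}`.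
The number of triples `(x,y,z) ∈ 𝔽_{q^m}³` with `y^q - y = x + a(β + x³)` and
`z^q - z = x + b(β + x³)` equals `q^m + Σ_{v ∈ 𝔽_q^*} e(vβ) Σ_{u ∈ 𝔽_q} S₃^{(m)}(u,v)`. -/
theorem affine_count_fibre_product_cubic
    (p r m : ℕ) (hp : p.Prime) (hp3 : p ≠ 3) (hr : 0 < r) (hm : 0 < m)
    (F E : Type) [Field F] [Fintype F] [DecidableEq F] [Field E] [Fintype E]
    [Algebra (ZMod p) E] [Algebra F E]
    (hF : Fintype.card F = p ^ r) (hE : Fintype.card E = (p ^ r) ^ m)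
    (a b : F) (hab : a ≠ b) (β : E) :
    (Nat.card {t : E × E × E //
        t.2.1 ^ (p ^ r) - t.2.1 = t.1 + algebraMap F E a * (β + t.1 ^ 3) ∧
        t.2.2 ^ (p ^ r) - t.2.2 = t.1 + algebraMap F E b * (β + t.1 ^ 3)} : ℂ) =
      ((p : ℂ) ^ r) ^ m +
        ∑ v ∈ Finset.univ.filter (fun v : F => v ≠ 0),
          addChar p E (algebraMap F E v * β) * ∑ u : F, S3 p F E u v :=
  affine_count_fibre_product_cubic_general p r m hp F E hF hE a b hab β
end

section
/- Let p be a prime, let q = p^r, let m ≥ 1, let a, b ∈ 𝔽_q with a ≠ b, and let β ∈ 𝔽_{q^m}. Then the number of triples (x, y, z) with x ∈ 𝔽_{q^m}^*, y, z ∈ 𝔽_{q^m}, satisfying y^q − y = x + a(β + x^{−1}) and z^q − z = x + b(β + x^{−1}) equals q^m − q − Σ_{v ∈ 𝔽_q^*} e(vβ) + Σ_{v ∈ 𝔽_q^*} e(vβ) · Σ_{u ∈ 𝔽_q^*} S_{−1}^{(m)}(u, v). (This is the affine point count of the fibre product L_{m,−1,β} of the two Kloosterman-type Artin–Schreier curves,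 whose number of rational places is N_{m,−1}(β) = q^m + 1 + Σ_{v ∈ 𝔽_q^*} e(vβ) Σ_{u ∈ 𝔽_q^*} S_{−1}^{(m)}(u,v).) -/
open Finset

/-- The Kloosterman-type sum `S₋₁^{(m)}(u,v) = Σ_{z ∈ 𝔽_{q^m}^*} e(uz + vz⁻¹)` for `u, v ∈ 𝔽_q`. -/
noncomputable def Sinv (p : ℕ) (F E : Type) [Field F] [Fintype F] [Field E] [Fintype E]
    [DecidableEq E] [Algebra (ZMod p) E] [Algebra F E] (u v : F) : ℂ :=
  ∑ z ∈ Finset.univ.filter (fun z : E => z ≠ 0),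
    addChar p E (algebraMap F E u * z + algebraMap F E v * z⁻¹)

/-! The number of `y ∈ 𝔽_{q^m}` with `y^q - y = w` is `∑_{t ∈ 𝔽_q} e(t w)`: the count is at most `q`
and vanishes unless `t ↦ e(t w)` is trivial (the trace is Frobenius-invariant), i.e. it is bounded by
the character sum, and both sides add up to `q^m` over `w`. Multiplying the counts for `y` and `z`
and summing over `x ≠ 0` gives a sum over `(u, v) ∈ 𝔽_q²`, which the substitution
`(s, t) = (u + v, ua + vb)`, invertible because `a ≠ b`, turns into `∑_{s,t} e(tβ) S₋₁(s, t)`. The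
degenerate Kloosterman sums with `s = 0` or `t = 0` equal `-1`, and `q^m - 1` when `s = t = 0`. -/

lemma sum_eq_add_sum_filter_ne_zero {M R : Type} [Fintype M] [Zero M] [DecidableEq M]
    [AddCommMonoid R] (f : M → R) :
    ∑ s, f s = f 0 + ∑ s ∈ univ.filter (· ≠ 0), f s := by
  rw [filter_ne', add_sum_erase _ _ (mem_univ 0)]

lemma sum_sum_add_mul_add_mul {K M : Type} [Field K] [Fintype K] [AddCommMonoid M] {a b : K}
    (hab : a ≠ b) (f : K → K → M) :
    ∑ u, ∑ v, f (u + v) (u * a + v * b) = ∑ s, ∑ t, f s t := by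
  have hba : b - a ≠ 0 := sub_ne_zero.2 hab.symm
  let e : K × K ≃ K × K :=
    { toFun := fun uv => (uv.1 + uv.2, uv.1 * a + uv.2 * b)
      invFun := fun st => ((st.1 * b - st.2) / (b - a), (st.2 - st.1 * a) / (b - a))
      left_inv := fun _ => by ext <;> field_simp <;> ring
      right_inv := fun _ => by ext <;> field_simp <;> ring }
  rw [← Fintype.sum_prod_type', ← Fintype.sum_prod_type']
  exact e.sum_comp fun st => f st.1 st.2

lemma natCard_subtype_prod_prod {α β γ : Type} [Fintype α] [Fintype β] [Fintype γ]
    (P : α → Prop) (Q : α → β → Prop) (R : α → γ → Prop) [DecidablePred P]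
    [∀ x, DecidablePred (Q x)] [∀ x, DecidablePred (R x)] :
    Nat.card {t : α × β × γ // P t.1 ∧ Q t.1 t.2.1 ∧ R t.1 t.2.2} =
      ∑ x ∈ univ.filter P, #(univ.filter (Q x)) * #(univ.filter (R x)) := by
  simp only [Nat.card_eq_fintype_card, Fintype.card_subtype, card_filter, Fintype.sum_prod_type,
    ite_and, sum_ite_irrel, sum_const_zero, sum_filter, sum_mul, boole_mul]

lemma card_filter_pow_sub_self_eq_le {K : Type} [Field K] [Fintype K] [DecidableEq K] {n : ℕ}
    (hn : 1 < n) (w : K) : #(univ.filter fun y : K => y ^ n - y = w) ≤ n := by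
  open Polynomial in
  have hdeg : (X ^ n - X - C w : K[X]).natDegree = n := by
    rw [sub_sub, natDegree_sub_eq_left_of_natDegree_lt] <;> simp [hn]
  have hne : (X ^ n - X - C w : K[X]) ≠ 0 := by
    rintro h; rw [h, natDegree_zero] at hdeg; omega
  refine hdeg ▸ card_le_degree_of_subset_roots fun y hy => ?_
  rw [mem_roots hne]
  simp_all

lemma trace_zmod_ringEquiv_apply {p : ℕ} {E : Type} [CommRing E] [Algebra (ZMod p) E]
    (σ : E ≃+* E) (x : E) :
    Algebra.trace (ZMod p) E (σ x) = Algebra.trace (ZMod p) E x :=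
  Algebra.trace_eq_of_algEquiv (AlgEquiv.ofRingEquiv (f := σ) fun c =>
    DFunLike.congr_fun (RingHom.ext_zmod ((σ : E →+* E).comp (algebraMap (ZMod p) E)) _) c) x

section TraceCharacter

variable {p : ℕ} [Fact p.Prime] {E : Type} [Field E] [Fintype E] [Algebra (ZMod p) E]

variable (p E) in
noncomputable def traceAddChar : AddChar E ℂ :=
  ZMod.stdAddChar.compAddMonoidHom (Algebra.trace (ZMod p) E).toAddMonoidHom

lemma traceAddChar_apply (x : E) : traceAddChar p E x = addChar p E x := by
  simp only [traceAddChar, AddChar.compAddMonoidHom_apply, LinearMap.toAddMonoidHom_coe,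
    ZMod.stdAddChar_apply, ZMod.toCircle_apply, addChar]

lemma isPrimitive_traceAddChar : (traceAddChar p E).IsPrimitive := by
  refine AddChar.IsPrimitive.of_ne_one (AddChar.ne_one_iff.2 ?_)
  obtain ⟨x, hx⟩ := Algebra.trace_surjective (ZMod p) E 1
  refine ⟨x, fun h => one_ne_zero ((ZMod.injective_stdAddChar (N := p)) ?_)⟩
  simpa [traceAddChar, hx] using h

variable {F : Type} [Field F] [Fintype F] [Algebra F E]

lemma traceAddChar_pow_card (x : E) :
    traceAddChar p E (x ^ Fintype.card F) = traceAddChar p E x := by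
  simpa [traceAddChar] using congrArg ZMod.stdAddChar <|
    trace_zmod_ringEquiv_apply (p := p) (FiniteField.frobeniusAlgEquivOfAlgebraic F E : E ≃+* E) x

lemma traceAddChar_mul_pow_card_sub_self (t : F) (y : E) :
    traceAddChar p E (algebraMap F E t * (y ^ Fintype.card F - y)) = 1 := by
  have h : algebraMap F E t * (y ^ Fintype.card F - y) =
      (algebraMap F E t * y) ^ Fintype.card F - algebraMap F E t * y := by
    rw [mul_pow, ← map_pow, FiniteField.pow_card, mul_sub]
  rw [h, sub_eq_add_neg, AddChar.map_add_eq_mul, traceAddChar_pow_card, ← AddChar.map_add_eq_mul,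
    add_neg_cancel, AddChar.map_zero_eq_one]

variable [DecidableEq E]

lemma sum_traceAddChar_mul_of_ne_zero {c : E} (hc : c ≠ 0) :
    ∑ x ∈ univ.filter (· ≠ 0), traceAddChar p E (c * x) = -1 := by
  have h := AddChar.sum_mulShift c (isPrimitive_traceAddChar (p := p) (E := E))
  rw [if_neg hc, ← add_sum_erase _ _ (mem_univ 0), zero_mul, AddChar.map_zero_eq_one] at h
  rw [filter_ne']
  simp only [mul_comm c]
  linear_combination h

lemma card_filter_pow_card_sub_self_eq (w : E) :
    (#(univ.filter fun y : E => y ^ Fintype.card F - y = w) : ℂ) =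
      ∑ t : F, traceAddChar p E (algebraMap F E t * w) := by
  classical
  set q := Fintype.card F
  let χ : E → AddChar F ℂ := fun w =>
    ((traceAddChar p E).mulShift w).compAddMonoidHom (algebraMap F E).toAddMonoidHom
  have hχ : ∀ w, ∑ t : F, traceAddChar p E (algebraMap F E t * w) =
      if χ w = 0 then (q : ℂ) else 0 := fun w => by
    rw [← AddChar.sum_eq_ite]; simp [χ, mul_comm]
  let g : E → ℕ := fun w => if χ w = 0 then q else 0
  have hle : ∀ w, #(univ.filter fun y : E => y ^ q - y = w) ≤ g w := fun w => by
    by_cases h : χ w = 0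
    · simpa [g, h] using card_filter_pow_sub_self_eq_le Fintype.one_lt_card w
    · simp only [g, if_neg h, Nat.le_zero, card_eq_zero, filter_eq_empty_iff]
      rintro y - rfl
      apply h; ext t
      simpa [χ, mul_comm] using traceAddChar_mul_pow_card_sub_self (p := p) t y
  have hsum : ∑ w, #(univ.filter fun y : E => y ^ q - y = w) = ∑ w, g w := by
    rw [← card_eq_sum_card_fiberwise fun y _ => mem_univ (y ^ q - y)]
    apply Nat.cast_injective (R := ℂ)
    have hg : ∀ w, (g w : ℂ) = ∑ t : F, traceAddChar p E (w * algebraMap F E t) := fun w => by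
      simp only [g, hχ, mul_comm w]; split_ifs <;> simp
    rw [Nat.cast_sum, sum_congr rfl fun w _ => hg w, sum_comm]
    simp [AddChar.sum_mulShift _ isPrimitive_traceAddChar]
  rw [hχ, (sum_eq_sum_iff_of_le (fun w _ => hle w)).1 hsum w (mem_univ w)]
  simp only [g]; split_ifs <;> simp

lemma Sinv_zero_zero : Sinv p F E 0 0 = Fintype.card E - 1 := by
  simp [Sinv, addChar, filter_ne', card_erase_of_mem, Nat.cast_sub Fintype.card_pos]

lemma Sinv_zero_right {u : F} (hu : u ≠ 0) : Sinv p F E u 0 = -1 := by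
  simpa [Sinv, ← traceAddChar_apply] using
    sum_traceAddChar_mul_of_ne_zero (p := p) ((map_ne_zero (algebraMap F E)).2 hu)

lemma Sinv_zero_left {v : F} (hv : v ≠ 0) : Sinv p F E 0 v = -1 := by
  rw [← sum_traceAddChar_mul_of_ne_zero (p := p) ((map_ne_zero (algebraMap F E)).2 hv)]
  simp only [Sinv, map_zero, zero_mul, zero_add, ← traceAddChar_apply]
  exact sum_nbij' (·⁻¹) (·⁻¹) (by simp) (by simp) (by simp) (by simp) (by simp)

lemma natCard_fibreProduct_eq_sum_Sinv {a b : F} (hab : a ≠ b) (β : E) :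
    (Nat.card {t : E × E × E // t.1 ≠ 0 ∧
        t.2.1 ^ Fintype.card F - t.2.1 = t.1 + algebraMap F E a * (β + t.1⁻¹) ∧
        t.2.2 ^ Fintype.card F - t.2.2 = t.1 + algebraMap F E b * (β + t.1⁻¹)} : ℂ) =
      ∑ u : F, ∑ v : F, addChar p E (algebraMap F E v * β) * Sinv p F E u v := by
  let G : F → F → ℂ := fun s t => ∑ x ∈ univ.filter (· ≠ 0),
    traceAddChar p E (algebraMap F E s * x + algebraMap F E t * (β + x⁻¹))
  rw [natCard_subtype_prod_prod (· ≠ 0)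
    (fun x y => y ^ Fintype.card F - y = x + algebraMap F E a * (β + x⁻¹))
    (fun x z => z ^ Fintype.card F - z = x + algebraMap F E b * (β + x⁻¹))]
  push_cast
  simp only [card_filter_pow_card_sub_self_eq (p := p), sum_mul_sum, ← AddChar.map_add_eq_mul]
  calc _ = ∑ u : F, ∑ v : F, G (u + v) (u * a + v * b) := by
        rw [sum_comm]
        refine sum_congr rfl fun u _ => ?_
        rw [sum_comm]
        refine sum_congr rfl fun v _ => sum_congr rfl fun x _ => ?_
        congr 1
        simp only [map_add, map_mul]
        ring
    _ = ∑ s : F, ∑ t : F, G s t := sum_sum_add_mul_add_mul hab G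
    _ = _ := by
        refine sum_congr rfl fun s _ => sum_congr rfl fun t _ => ?_
        simp only [G, Sinv, mul_sum, ← traceAddChar_apply, ← AddChar.map_add_eq_mul]
        exact sum_congr rfl fun x _ => by congr 1; ring

variable [DecidableEq F]

lemma sum_Sinv_zero_right : ∑ u : F, Sinv p F E u 0 = Fintype.card E - Fintype.card F := by
  rw [sum_eq_add_sum_filter_ne_zero, Sinv_zero_zero,
    sum_congr rfl fun u hu => Sinv_zero_right (mem_filter.1 hu).2]
  simp [filter_ne', card_erase_of_mem, Nat.cast_sub Fintype.card_pos]

lemma sum_sum_addChar_mul_Sinv (β : E) :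
    ∑ u : F, ∑ v : F, addChar p E (algebraMap F E v * β) * Sinv p F E u v =
      Fintype.card E - Fintype.card F -
        (∑ v ∈ univ.filter (· ≠ 0), addChar p E (algebraMap F E v * β)) +
        ∑ v ∈ univ.filter (· ≠ 0), addChar p E (algebraMap F E v * β) *
          ∑ u ∈ univ.filter (· ≠ 0), Sinv p F E u v := by
  simp only [sum_comm (γ := F), ← mul_sum]
  rw [sum_eq_add_sum_filter_ne_zero, sum_Sinv_zero_right,
    sum_congr rfl fun v hv => by
      rw [sum_eq_add_sum_filter_ne_zero, Sinv_zero_left (mem_filter.1 hv).2]]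
  simp [mul_add, sum_add_distrib, ← traceAddChar_apply]
  ring

end TraceCharacter

theorem affine_count_fibre_product_kloosterman_general
    (p r m : ℕ) (hp : p.Prime)
    (F E : Type) [Field F] [Fintype F] [DecidableEq F] [Field E] [Fintype E] [DecidableEq E]
    [Algebra (ZMod p) E] [Algebra F E]
    (hF : Fintype.card F = p ^ r) (hE : Fintype.card E = (p ^ r) ^ m)
    (a b : F) (hab : a ≠ b) (β : E) :
    (Nat.card {t : E × E × E // t.1 ≠ 0 ∧
        t.2.1 ^ (p ^ r) - t.2.1 = t.1 + algebraMap F E a * (β + t.1⁻¹) ∧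
        t.2.2 ^ (p ^ r) - t.2.2 = t.1 + algebraMap F E b * (β + t.1⁻¹)} : ℂ) =
      ((p : ℂ) ^ r) ^ m - (p : ℂ) ^ r -
        (∑ v ∈ Finset.univ.filter (fun v : F => v ≠ 0), addChar p E (algebraMap F E v * β)) +
        ∑ v ∈ Finset.univ.filter (fun v : F => v ≠ 0),
          addChar p E (algebraMap F E v * β) *
            ∑ u ∈ Finset.univ.filter (fun u : F => u ≠ 0), Sinv p F E u v := by
  have : Fact p.Prime := ⟨hp⟩
  rw [← hF, natCard_fibreProduct_eq_sum_Sinv (p := p) hab, sum_sum_addChar_mul_Sinv, hE, hF]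
  push_cast
  rfl

/-- Let `p` be a prime, `q = p^r`, `m ≥ 1`, `a ≠ b` in `𝔽_q`, and `β ∈ 𝔽_{q^m}`.
The number of triples `(x,y,z)` with `x ∈ 𝔽_{q^m}^*`, `y, z ∈ 𝔽_{q^m}`,
`y^q - y = x + a(β + x⁻¹)` and `z^q - z = x + b(β + x⁻¹)` equals
`q^m - q - Σ_{v ∈ 𝔽_q^*} e(vβ) + Σ_{v ∈ 𝔽_q^*} e(vβ) Σ_{u ∈ 𝔽_q^*} S₋₁^{(m)}(u,v)`. -/
theorem affine_count_fibre_product_kloosterman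
    (p r m : ℕ) (hp : p.Prime) (hr : 0 < r) (hm : 0 < m)
    (F E : Type) [Field F] [Fintype F] [DecidableEq F] [Field E] [Fintype E] [DecidableEq E]
    [Algebra (ZMod p) E] [Algebra F E]
    (hF : Fintype.card F = p ^ r) (hE : Fintype.card E = (p ^ r) ^ m)
    (a b : F) (hab : a ≠ b) (β : E) :
    (Nat.card {t : E × E × E // t.1 ≠ 0 ∧
        t.2.1 ^ (p ^ r) - t.2.1 = t.1 + algebraMap F E a * (β + t.1⁻¹) ∧
        t.2.2 ^ (p ^ r) - t.2.2 = t.1 + algebraMap F E b * (β + t.1⁻¹)} : ℂ) =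
      ((p : ℂ) ^ r) ^ m - (p : ℂ) ^ r -
        (∑ v ∈ Finset.univ.filter (fun v : F => v ≠ 0), addChar p E (algebraMap F E v * β)) +
        ∑ v ∈ Finset.univ.filter (fun v : F => v ≠ 0),
          addChar p E (algebraMap F E v * β) *
            ∑ u ∈ Finset.univ.filter (fun u : F => u ≠ 0), Sinv p F E u v :=
  affine_count_fibre_product_kloosterman_general p r m hp F E hF hE a b hab β
end

section
/- Let p ∈ {2, 3}, q = p^r, and suppose either d = −1 (with the convention 0^{−1} = 0), or d = 3 and p = 2. Write m = p^k·s with p ∤ s. Then G_{0,d}(m) = Σ_{t | s} μ(s/t) · H_{0,d}(p^k·t) − Σ_{i=0}^{k−1} I(p^i·s), where μ is the Möbius function and I(n) = Σ_{t | n} μ(t)·q^{n/t}. -/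
/-!
Sort the elements of `𝔽_{q^{p^k t}}` (`t ∣ s`) by their degree `p^a u` with `a ≤ k`, `u ∣ t`.
For `z` of degree `n` we have `tr_{cn} z = c · tr_n z`; here `c = p^{k-a} (t/u)` and `p ∤ t/u`, so
the two trace conditions hold automatically when `a < k` and reduce to the conditions at level
`p^k u` when `a = k`. Hence `H(p^k t) = Σ_{u ∣ t} G(p^k u) + Σ_{a<k} Σ_{u ∣ t} N(p^a u)`, where
`N(n)` counts the elements of degree `n`. Möbius inversion over `t ∣ s` leaves
`G(p^k s) + Σ_{a<k} N(p^a s)`, and `N(n) = I(n)` by Möbius inversion of `q^n = Σ_{d ∣ n} N(d)`.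
-/

open Finset Polynomial ArithmeticFunction
open scoped ArithmeticFunction.Moebius

theorem Nat.sum_divisors_prime_pow_mul {M : Type*} [AddCommMonoid M] {p t : ℕ} (hp : p.Prime)
    (hpt : ¬ p ∣ t) (k : ℕ) (f : ℕ → M) :
    ∑ n ∈ (p ^ k * t).divisors, f n = ∑ a ∈ range (k + 1), ∑ u ∈ t.divisors, f (p ^ a * u) := by
  have hcop : (p ^ k).Coprime t := ((Nat.Prime.coprime_iff_not_dvd hp).2 hpt).pow_left k
  rw [Nat.divisors_mul, Finset.mul_def, sum_image hcop.mul_injOn_divisors, sum_product,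
    Nat.sum_divisors_prime_pow hp]

theorem sum_moebius_mul_sum_divisors (f : ℕ → ℤ) {s : ℕ} (hs : 0 < s) :
    ∑ t ∈ s.divisors, μ (s / t) * ∑ u ∈ t.divisors, f u = f s := by
  rw [← Nat.sum_divisorsAntidiagonal' fun a b => μ a * ∑ u ∈ b.divisors, f u]
  exact (sum_eq_iff_sum_mul_moebius_eq.1 (fun _ _ => rfl)) s hs

theorem natCard_subtype_eq_sum_natCard_fiber {α β : Type*} [Finite α] (f : α → β) (S : Finset β)
    (Q : α → Prop) : Nat.card {a // f a ∈ S ∧ Q a} = ∑ b ∈ S, Nat.card {a // f a = b ∧ Q a} := by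
  classical
  have := Fintype.ofFinite α
  simp only [Nat.card_eq_fintype_card, Fintype.card_subtype]
  rw [card_eq_sum_card_fiberwise (f := f) (t := S) (fun a ha => (mem_filter.1 ha).2.1)]
  refine sum_congr rfl fun b hb => congrArg card (Finset.ext fun a => ?_)
  simp only [mem_filter, mem_univ, true_and]
  constructor
  · rintro ⟨⟨-, hQ⟩, rfl⟩
    exact ⟨rfl, hQ⟩
  · rintro ⟨rfl, hQ⟩
    exact ⟨⟨hb, hQ⟩, rfl⟩

section Trace

variable {E : Type*} [Field E]

/-- On `𝔽_{q^n}` this is the trace `tr_n` to `𝔽_q`. -/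
def frobTrace (q n : ℕ) (z : E) : E := ∑ i ∈ range n, z ^ q ^ i

def TracesVanish (q : ℕ) (d : ℤ) (n : ℕ) (z : E) : Prop :=
  frobTrace q n z = 0 ∧ frobTrace q n (z ^ d) = 0

theorem frobTrace_mul {q n : ℕ} {z : E} (hz : z ^ q ^ n = z) (c : ℕ) :
    frobTrace q (c * n) z = c * frobTrace q n z := by
  induction c with
  | zero => simp [frobTrace]
  | succ c ih =>
    have hperiod : z ^ q ^ (c * n) = z := by
      have := Function.IsFixedPt.iterate (f := (· ^ q ^ n)) hz c
      rwa [Function.IsFixedPt, pow_iterate, ← pow_mul, mul_comm] at this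
    have hshift (i : ℕ) : z ^ q ^ (c * n + i) = z ^ q ^ i := by rw [pow_add, pow_mul, hperiod]
    simp only [frobTrace] at ih ⊢
    rw [add_mul, one_mul, sum_range_add, ih, sum_congr rfl fun i _ => hshift i]
    push_cast
    ring

theorem tracesVanish_mul_iff {q n : ℕ} {z : E} (d : ℤ) (hz : z ^ q ^ n = z) (c : ℕ) :
    TracesVanish q d (c * n) z ↔ (c : E) = 0 ∨ TracesVanish q d n z := by
  have hzd : (z ^ d) ^ q ^ n = z ^ d := by rw [← zpow_natCast, zpow_comm, zpow_natCast, hz]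
  simp only [TracesVanish, frobTrace_mul hz, frobTrace_mul hzd, mul_eq_zero, or_and_left]

end Trace

theorem natCard_pow_pow_eq_self {E : Type*} [Field E] [Finite E] {c a b : ℕ}
    (hE : Nat.card E = c ^ b) (hab : a ∣ b) :
    Nat.card {z : E // z ^ c ^ a = z} = c ^ a := by
  classical
  have hE1 : 1 < c ^ b := hE ▸ Finite.one_lt_card
  have hca : 1 < c ^ a := by
    have hc : 1 < c := by
      by_contra! h
      exact hE1.not_ge (pow_le_one' h b)
    refine Nat.one_lt_pow ?_ hc
    rintro rfl
    rw [Nat.eq_zero_of_zero_dvd hab, pow_zero] at hE1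
    exact lt_irrefl 1 hE1
  set P : E[X] := X ^ c ^ a - X
  have hPQ : P ∣ X ^ Nat.card E - X := hE ▸ dvd_pow_pow_sub_self_of_dvd hab
  have hQ : (X ^ Nat.card E - X : E[X]) ≠ 0 :=
    FiniteField.X_pow_card_sub_X_ne_zero E Finite.one_lt_card
  have hP : P ≠ 0 := ne_zero_of_dvd_ne_zero hQ hPQ
  have := Fintype.ofFinite E
  have hnodup : P.roots.Nodup := by
    refine Multiset.nodup_of_le (roots.le_of_dvd hQ hPQ) ?_
    rw [Nat.card_eq_fintype_card, FiniteField.roots_X_pow_card_sub_X]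
    exact Finset.nodup _
  have hsplit : P.Splits := splits_X_pow_nat_card_sub_X.of_dvd hQ hPQ
  calc Nat.card {z : E // z ^ c ^ a = z}
      = #P.roots.toFinset := by
        rw [Nat.card_eq_fintype_card, Fintype.card_subtype]
        congr 1
        ext z
        simp [P, mem_roots hP, sub_eq_zero]
    _ = P.natDegree := by
        rw [Multiset.toFinset_card_of_nodup hnodup, hsplit.natDegree_eq_card_roots]
    _ = c ^ a := FiniteField.X_pow_card_sub_X_natDegree_eq E hca

section FiniteField

variable {F E : Type*} [Field F] [Finite F] [Field E] [Finite E] [Algebra F E]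

theorem pow_natCard_pow_eq_self_iff (z : E) (n : ℕ) :
    z ^ Nat.card F ^ n = z ↔ (minpoly F z).natDegree ∣ n := by
  rw [(minpoly.irreducible (IsIntegral.of_finite F z)).natDegree_dvd_iff_dvd_X_pow_card_pow_sub_X,
    minpoly.dvd_iff]
  simp [sub_eq_zero]

variable (F) in
theorem sum_natCard_natDegree_minpoly_eq {m n : ℕ} (hE : Nat.card E = Nat.card F ^ m)
    (hn : n ∣ m) :
    ∑ d ∈ n.divisors, Nat.card {z : E // (minpoly F z).natDegree = d} = Nat.card F ^ n := by
  have hn0 : n ≠ 0 := by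
    rintro rfl
    rw [Nat.eq_zero_of_zero_dvd hn, pow_zero] at hE
    exact Finite.one_lt_card.ne' hE
  have hfiber := natCard_subtype_eq_sum_natCard_fiber (fun z : E => (minpoly F z).natDegree)
    n.divisors (fun _ => True)
  simp only [and_true, Nat.mem_divisors, and_iff_left hn0] at hfiber
  rw [← natCard_pow_pow_eq_self hE hn]
  simp only [pow_natCard_pow_eq_self_iff, hfiber]

theorem natCard_natDegree_minpoly_eq {m n : ℕ} (hE : Nat.card E = Nat.card F ^ m) (hn : n ∣ m)
    (hn0 : 0 < n) :
    (Nat.card {z : E // (minpoly F z).natDegree = n} : ℤ) =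
      ∑ t ∈ n.divisors, μ t * (Nat.card F : ℤ) ^ (n / t) := by
  have hinv := (sum_eq_iff_sum_mul_moebius_eq_on {n | n ∣ m} (fun a b hab hb => hab.trans hb)
    (f := fun n => (Nat.card {z : E // (minpoly F z).natDegree = n} : ℤ))
    (g := fun n => (Nat.card F : ℤ) ^ n)).1
    (fun n _ hn => by exact_mod_cast sum_natCard_natDegree_minpoly_eq F hE hn) n hn0 hn
  rw [← hinv]
  simp only [Int.cast_id]
  exact Nat.sum_divisorsAntidiagonal (fun a b => μ a * (Nat.card F : ℤ) ^ b)

variable {p : ℕ} [CharP E p]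

theorem tracesVanish_pow_mul_iff {z : E} (d : ℤ) {a k u t : ℕ}
    (hdeg : (minpoly F z).natDegree = p ^ a * u) (hak : a ≤ k) (hut : u ∣ t) (hpt : ¬ p ∣ t) :
    TracesVanish (Nat.card F) d (p ^ k * t) z ↔
      a < k ∨ TracesVanish (Nat.card F) d (p ^ a * u) z := by
  obtain ⟨c, rfl⟩ := hut
  have hz : z ^ Nat.card F ^ (p ^ a * u) = z := (pow_natCard_pow_eq_self_iff z _).2 hdeg.dvd
  have hN : p ^ k * (u * c) = (p ^ (k - a) * c) * (p ^ a * u) := by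
    rw [show p ^ k = p ^ (k - a) * p ^ a by rw [← pow_add, Nat.sub_add_cancel hak]]
    ring
  have hpc : ¬ p ∣ c := fun h => hpt (h.mul_left u)
  have hdvd : p ∣ p ^ (k - a) * c ↔ a < k := by
    rcases Nat.lt_or_ge a k with hlt | hge
    · exact iff_of_true (dvd_mul_of_dvd_left (dvd_pow_self p (by omega)) c) hlt
    · rw [Nat.sub_eq_zero_of_le hge, pow_zero, one_mul]
      exact iff_of_false hpc (by omega)
  rw [hN, tracesVanish_mul_iff d hz, CharP.cast_eq_zero_iff E p, hdvd]

variable (F) in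
theorem natCard_fixed_tracesVanish (hp : p.Prime) {t : ℕ} (hpt : ¬ p ∣ t) (k : ℕ) (d : ℤ) :
    Nat.card {z : E // z ^ Nat.card F ^ (p ^ k * t) = z ∧
        TracesVanish (Nat.card F) d (p ^ k * t) z} =
      ∑ u ∈ t.divisors, Nat.card {z : E // (minpoly F z).natDegree = p ^ k * u ∧
          TracesVanish (Nat.card F) d (p ^ k * u) z} +
      ∑ a ∈ range k, ∑ u ∈ t.divisors,
          Nat.card {z : E // (minpoly F z).natDegree = p ^ a * u} := by
  have hN : p ^ k * t ≠ 0 :=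
    mul_ne_zero (pow_ne_zero k hp.ne_zero) (by rintro rfl; exact hpt (dvd_zero p))
  have hfiber {a u : ℕ} (ha : a ≤ k) (hu : u ∈ t.divisors) :
      Nat.card {z : E // (minpoly F z).natDegree = p ^ a * u ∧
          TracesVanish (Nat.card F) d (p ^ k * t) z} =
        Nat.card {z : E // (minpoly F z).natDegree = p ^ a * u ∧
          (a < k ∨ TracesVanish (Nat.card F) d (p ^ a * u) z)} :=
    Nat.card_congr <| Equiv.subtypeEquivRight fun z => and_congr_right fun hdeg =>
      tracesVanish_pow_mul_iff d hdeg ha (Nat.dvd_of_mem_divisors hu) hpt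
  have hsplit := natCard_subtype_eq_sum_natCard_fiber (fun z : E => (minpoly F z).natDegree)
    (p ^ k * t).divisors (TracesVanish (Nat.card F) d (p ^ k * t))
  simp only [Nat.mem_divisors, and_iff_left hN, ← pow_natCard_pow_eq_self_iff] at hsplit
  rw [hsplit, Nat.sum_divisors_prime_pow_mul hp hpt, sum_range_succ, add_comm]
  congr 1
  · refine sum_congr rfl fun u hu => ?_
    simp only [hfiber le_rfl hu, lt_irrefl, false_or]
  · refine sum_congr rfl fun a ha => sum_congr rfl fun u hu => ?_
    have hak := mem_range.1 ha
    simp only [hfiber hak.le hu, hak, true_or, and_true]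

variable (F) in
theorem natCard_natDegree_eq_and_tracesVanish (hp : p.Prime) {k s : ℕ} (hps : ¬ p ∣ s) (d : ℤ)
    (hE : Nat.card E = Nat.card F ^ (p ^ k * s)) :
    (Nat.card {z : E // (minpoly F z).natDegree = p ^ k * s ∧
        TracesVanish (Nat.card F) d (p ^ k * s) z} : ℤ) =
      ∑ t ∈ s.divisors, μ (s / t) * (Nat.card {z : E // z ^ Nat.card F ^ (p ^ k * t) = z ∧
          TracesVanish (Nat.card F) d (p ^ k * t) z} : ℤ) -
      ∑ a ∈ range k, ∑ t ∈ (p ^ a * s).divisors,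
          μ t * (Nat.card F : ℤ) ^ ((p ^ a * s) / t) := by
  have hs : 0 < s := Nat.pos_of_ne_zero (by rintro rfl; exact hps (dvd_zero p))
  set D : ℕ → ℤ := fun n => Nat.card {z : E // (minpoly F z).natDegree = n}
  set G : ℕ → ℤ := fun n => Nat.card {z : E // (minpoly F z).natDegree = n ∧
    TracesVanish (Nat.card F) d n z}
  have hH (t : ℕ) (ht : t ∈ s.divisors) : (Nat.card {z : E // z ^ Nat.card F ^ (p ^ k * t) = z ∧
      TracesVanish (Nat.card F) d (p ^ k * t) z} : ℤ) =
      ∑ u ∈ t.divisors, G (p ^ k * u) + ∑ a ∈ range k, ∑ u ∈ t.divisors, D (p ^ a * u) := by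
    have hpt : ¬ p ∣ t := fun h => hps (h.trans (Nat.dvd_of_mem_divisors ht))
    rw [natCard_fixed_tracesVanish F hp hpt k d]
    push_cast
    rfl
  have hD (a : ℕ) (ha : a ∈ range k) : D (p ^ a * s) = ∑ t ∈ (p ^ a * s).divisors,
      μ t * (Nat.card F : ℤ) ^ ((p ^ a * s) / t) :=
    natCard_natDegree_minpoly_eq hE (mul_dvd_mul_right (pow_dvd_pow p (mem_range.1 ha).le) s)
      (Nat.mul_pos (pow_pos hp.pos a) hs)
  rw [eq_sub_iff_add_eq, eq_comm]
  calc ∑ t ∈ s.divisors, μ (s / t) * (Nat.card {z : E // z ^ Nat.card F ^ (p ^ k * t) = z ∧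
          TracesVanish (Nat.card F) d (p ^ k * t) z} : ℤ)
      = ∑ t ∈ s.divisors, μ (s / t) * ∑ u ∈ t.divisors, G (p ^ k * u) +
          ∑ a ∈ range k, ∑ t ∈ s.divisors, μ (s / t) * ∑ u ∈ t.divisors, D (p ^ a * u) := by
        rw [sum_congr rfl fun t ht => congrArg _ (hH t ht)]
        simp only [mul_add, mul_sum, sum_add_distrib]
        rw [sum_comm (s := s.divisors) (t := range k)]
    _ = G (p ^ k * s) + ∑ a ∈ range k, ∑ t ∈ (p ^ a * s).divisors,
          μ t * (Nat.card F : ℤ) ^ ((p ^ a * s) / t) := by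
        rw [sum_moebius_mul_sum_divisors _ hs, sum_congr rfl fun a _ =>
          sum_moebius_mul_sum_divisors (fun u => D (p ^ a * u)) hs, sum_congr rfl hD]

end FiniteField

theorem moebius_inversion_G_zero_general
    (p r k s : ℕ) (hp : p = 2 ∨ p = 3) (hps : ¬ p ∣ s)
    (d : ℤ)
    (F E : Type) [Field F] [Fintype F] [Field E] [Fintype E] [Algebra F E]
    (hF : Fintype.card F = p ^ r) (hE : Fintype.card E = (p ^ r) ^ (p ^ k * s)) :
    (Nat.card {z : E // (minpoly F z).natDegree = p ^ k * s ∧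
        (∑ i ∈ Finset.range (p ^ k * s), z ^ (p ^ r) ^ i) = 0 ∧
        (∑ i ∈ Finset.range (p ^ k * s), (z ^ d) ^ (p ^ r) ^ i) = 0} : ℤ) =
      (∑ t ∈ s.divisors, (ArithmeticFunction.moebius (s / t)) *
          (Nat.card {z : E // z ^ (p ^ r) ^ (p ^ k * t) = z ∧
            (∑ i ∈ Finset.range (p ^ k * t), z ^ (p ^ r) ^ i) = 0 ∧
            (∑ i ∈ Finset.range (p ^ k * t), (z ^ d) ^ (p ^ r) ^ i) = 0} : ℤ)) -
      ∑ i ∈ Finset.range k, ∑ t ∈ (p ^ i * s).divisors,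
          (ArithmeticFunction.moebius t) * ((p : ℤ) ^ r) ^ ((p ^ i * s) / t) := by
  have hpp : p.Prime := by rcases hp with rfl | rfl <;> norm_num
  have : Fact p.Prime := ⟨hpp⟩
  have : CharP E p := charP_of_card_eq_prime_pow (hE.trans (pow_mul p r _).symm)
  have hq : Nat.card F = p ^ r := by rw [Nat.card_eq_fintype_card, hF]
  have hqE : Nat.card E = Nat.card F ^ (p ^ k * s) := by rw [Nat.card_eq_fintype_card, hE, hq]
  have h := natCard_natDegree_eq_and_tracesVanish F hpp hps d hqE
  rw [hq, Nat.cast_pow] at h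
  exact h

/-- Let `p ∈ {2,3}`, `q = p^r`, and `d = -1` (with the convention `0⁻¹ = 0`) or `d = 3`
with `p = 2`.  Write `m = p^k·s` with `p ∤ s`.  Here `𝔽_{q^n}` (for `n ∣ m`) is realized
inside `E = 𝔽_{q^m}` as `{z : z^{q^n} = z}`, the relative trace `tr_n : 𝔽_{q^n} → 𝔽_q` is
`z ↦ Σ_{i<n} z^{q^i}`, `H_{0,d}(n) = #{z ∈ 𝔽_{q^n} : tr_n(z) = 0, tr_n(z^d) = 0}`, and
`G_{0,d}(m)` counts such `z` of degree `m` over `𝔽_q`.  Then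
`G_{0,d}(m) = Σ_{t ∣ s} μ(s/t)·H_{0,d}(p^k t) - Σ_{i=0}^{k-1} I(p^i s)`,
where `I(n) = Σ_{t ∣ n} μ(t)·q^{n/t}`. -/
theorem moebius_inversion_G_zero
    (p r k s : ℕ) (hp : p = 2 ∨ p = 3) (hr : 0 < r) (hs : 0 < s) (hps : ¬ p ∣ s)
    (d : ℤ) (hd : d = -1 ∨ (d = 3 ∧ p = 2))
    (F E : Type) [Field F] [Fintype F] [Field E] [Fintype E] [Algebra F E]
    (hF : Fintype.card F = p ^ r) (hE : Fintype.card E = (p ^ r) ^ (p ^ k * s)) :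
    (Nat.card {z : E // (minpoly F z).natDegree = p ^ k * s ∧
        (∑ i ∈ Finset.range (p ^ k * s), z ^ (p ^ r) ^ i) = 0 ∧
        (∑ i ∈ Finset.range (p ^ k * s), (z ^ d) ^ (p ^ r) ^ i) = 0} : ℤ) =
      (∑ t ∈ s.divisors, (ArithmeticFunction.moebius (s / t)) *
          (Nat.card {z : E // z ^ (p ^ r) ^ (p ^ k * t) = z ∧
            (∑ i ∈ Finset.range (p ^ k * t), z ^ (p ^ r) ^ i) = 0 ∧
            (∑ i ∈ Finset.range (p ^ k * t), (z ^ d) ^ (p ^ r) ^ i) = 0} : ℤ)) -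
      ∑ i ∈ Finset.range k, ∑ t ∈ (p ^ i * s).divisors,
          (ArithmeticFunction.moebius t) * ((p : ℤ) ^ r) ^ ((p ^ i * s) / t) :=
  moebius_inversion_G_zero_general p r k s hp hps d F E hF hE
end

section
/- Let p ∈ {2, 3}, q = p^r, let c ∈ 𝔽_q^*, and suppose either d = −1 (with the convention 0^{−1} = 0), or d = 3 and p = 2. Write m = p^k·s with p ∤ s. Then G_{c,d}(m) = Σ_{t | s} μ(s/t) · H_{c,d}(p^k·t), where μ is the Möbius function. -/
/-!
An element `z` counted by `H(p^k t)`, `t ∣ s`, has some degree `e ∣ p^k t`, and since `z` and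
`z ^ d` lie in `𝔽_{q^e}`, the trace `tr_{p^k t}` is `(p^k t / e) • tr_e` on both. As `c ≠ 0`, the
factor `p^k t / e` is prime to `p`, so `e = p^k u` with `u ∣ t`, and `z` is counted by `G(p^k u)`
for the value `(t / u)⁻¹ c`. In characteristic `2` this value is `c`; in characteristic `3` it is
`±c`, and `z ↦ -z` exchanges the solutions for `c` and `-c` because `q` and `d = -1` are odd.
Hence `H(p^k t) = ∑_{u ∣ t} G(p^k u)` for every `t ∣ s`, and Möbius inversion gives the formula.
-/

open Finset Polynomial IntermediateField

theorem FiniteField.pow_card_pow_eq_self_iff_natDegree_minpoly_dvd {F E : Type*} [Field F]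
    [Fintype F] [Field E] [Algebra F E] {z : E} (hz : IsIntegral F z) (n : ℕ) :
    z ^ Fintype.card F ^ n = z ↔ (minpoly F z).natDegree ∣ n := by
  have : FiniteDimensional F F⟮z⟯ := adjoin.finiteDimensional hz
  have : Finite F⟮z⟯ := Module.finite_of_finite F
  rw [← adjoin.finrank hz, ← orderOf_frobeniusAlgHom F F⟮z⟯, orderOf_dvd_iff_pow_eq_one]
  refine ⟨fun h => adjoin_algHom_ext F fun x hx => Subtype.ext ?_, fun h => ?_⟩
  · rw [Set.mem_singleton_iff] at hx
    subst hx
    simpa [AlgHom.coe_pow, coe_frobeniusAlgHom, pow_iterate] using h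
  · simpa [AlgHom.coe_pow, coe_frobeniusAlgHom, pow_iterate] using
      congrArg Subtype.val (AlgHom.congr_fun h (AdjoinSimple.gen F z))

theorem minpoly.natDegree_neg {F E : Type*} [Field F] [Ring E] [Algebra F E] (z : E) :
    (minpoly F (-z)).natDegree = (minpoly F z).natDegree := by
  rw [minpoly.neg, ← C_1, ← C_neg, ← C_pow, natDegree_C_mul_of_isUnit (isUnit_neg_one.pow _),
    natDegree_comp, Polynomial.natDegree_neg, natDegree_X, mul_one]

theorem natCast_eq_one_or_eq_neg_one_of_not_dvd {R : Type*} [Ring R] {p : ℕ} [CharP R p]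
    (hp : p = 2 ∨ p = 3) {w : ℕ} (hw : ¬ p ∣ w) : (w : R) = 1 ∨ (w : R) = -1 := by
  have hunit : ∀ x : ZMod p, x ≠ 0 → x = 1 ∨ x = -1 := by rcases hp with rfl | rfl <;> decide
  rcases hunit w (by rwa [Ne, ZMod.natCast_eq_zero_iff]) with h | h
  · left; simpa using congrArg (ZMod.castHom (dvd_refl p) R) h
  · right; simpa using congrArg (ZMod.castHom (dvd_refl p) R) h

theorem pow_pow_eq_self {M : Type*} [Monoid M] {z : M} {n : ℕ} (hz : z ^ n = z) :
    ∀ w : ℕ, z ^ n ^ w = z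
  | 0 => by rw [pow_zero, pow_one]
  | w + 1 => by rw [pow_succ, pow_mul, pow_pow_eq_self hz w, hz]

theorem zpow_pow_eq_self {G : Type*} [DivisionMonoid G] {z : G} {n : ℕ} (hz : z ^ n = z) (d : ℤ) :
    (z ^ d) ^ n = z ^ d := by
  rw [← zpow_natCast, zpow_comm, zpow_natCast, hz]

section TraceSum

variable {R : Type*} [Ring R] {q : ℕ}

/-- `tr_n z = ∑_{i<n} z ^ q ^ i`, meaningful for `z ∈ 𝔽_{q^n} = {z | z ^ q ^ n = z}`. -/
def traceSum (q n : ℕ) (z : R) : R := ∑ i ∈ range n, z ^ q ^ i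

theorem traceSum_mul {e : ℕ} {z : R} (hz : z ^ q ^ e = z) (w : ℕ) :
    traceSum q (e * w) z = w • traceSum q e z := by
  induction w with
  | zero => simp [traceSum]
  | succ w ih =>
    have hzw : z ^ q ^ (e * w) = z := by rw [pow_mul, pow_pow_eq_self hz]
    rw [mul_add, mul_one, succ_nsmul, ← ih]
    simp only [traceSum, sum_range_add, pow_add, pow_mul z, hzw]

theorem traceSum_neg (hq : Odd q) (n : ℕ) (z : R) : traceSum q n (-z) = -traceSum q n z := by
  simp only [traceSum, (hq.pow).neg_pow, sum_neg_distrib]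

end TraceSum

section Solutions

variable (F : Type*) {E : Type*} [Field F] [Fintype F] [Field E] [Fintype E] [Algebra F E]

open scoped Classical in
/-- `H_{c,d}(n) = #(traceSolutions F n d (algebraMap F E c))`. -/
noncomputable def traceSolutions (n : ℕ) (d : ℤ) (a : E) : Finset E :=
  {z | z ^ Fintype.card F ^ n = z ∧ traceSum (Fintype.card F) n z = 0 ∧
    traceSum (Fintype.card F) n (z ^ d) = a}

open scoped Classical in
/-- `G_{c,d}(n) = #(traceSolutionsOfDegree F n d (algebraMap F E c))`. -/
noncomputable def traceSolutionsOfDegree (n : ℕ) (d : ℤ) (a : E) : Finset E :=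
  {z | (minpoly F z).natDegree = n ∧ traceSum (Fintype.card F) n z = 0 ∧
    traceSum (Fintype.card F) n (z ^ d) = a}

theorem pow_card_pow_natDegree_minpoly (z : E) :
    z ^ Fintype.card F ^ (minpoly F z).natDegree = z :=
  (FiniteField.pow_card_pow_eq_self_iff_natDegree_minpoly_dvd
    (Algebra.IsIntegral.isIntegral z) _).2 dvd_rfl

variable {F} {d : ℤ} {a : E} {z : E}

theorem mem_traceSolutions_iff_of_natDegree_minpoly_eq {e w : ℕ}
    (he : (minpoly F z).natDegree = e) (hw : (w : E) ≠ 0) :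
    z ∈ traceSolutions F (e * w) d a ↔ z ∈ traceSolutionsOfDegree F e d ((w : E)⁻¹ * a) := by
  subst he
  have hz := pow_card_pow_natDegree_minpoly F z
  simp only [traceSolutions, traceSolutionsOfDegree, mem_filter, mem_univ, true_and,
    pow_mul, pow_pow_eq_self hz, traceSum_mul hz, traceSum_mul (zpow_pow_eq_self hz d),
    nsmul_eq_mul, mul_eq_zero, hw, false_or, eq_inv_mul_iff_mul_eq₀ hw]

variable {p k t : ℕ} [CharP E p]

theorem exists_natDegree_minpoly_eq_of_mem_traceSolutions (hp : p.Prime) (ha : a ≠ 0)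
    (hz : z ∈ traceSolutions F (p ^ k * t) d a) :
    ∃ u, u ∣ t ∧ (minpoly F z).natDegree = p ^ k * u := by
  simp only [traceSolutions, mem_filter, mem_univ, true_and] at hz
  obtain ⟨hfix, -, htr⟩ := hz
  obtain ⟨w, hw⟩ := (FiniteField.pow_card_pow_eq_self_iff_natDegree_minpoly_dvd
    (Algebra.IsIntegral.isIntegral z) _).1 hfix
  have hpw : ¬ p ∣ w := by
    intro hpw
    apply ha
    rw [← htr, hw, traceSum_mul (zpow_pow_eq_self (pow_card_pow_natDegree_minpoly F z) d) w,
      nsmul_eq_mul, (CharP.cast_eq_zero_iff E p w).2 hpw, zero_mul]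
  obtain ⟨u, hu⟩ : p ^ k ∣ (minpoly F z).natDegree :=
    (Nat.Coprime.pow_left k ((Nat.Prime.coprime_iff_not_dvd hp).2 hpw)).dvd_of_dvd_mul_right
      ⟨t, hw.symm⟩
  refine ⟨u, Dvd.intro w (Nat.eq_of_mul_eq_mul_left (pow_pos hp.pos k) ?_), hu⟩
  rw [hw, hu, mul_assoc]

theorem card_traceSolutions_eq_sum (hp : p.Prime) (hpt : ¬ p ∣ t) (ha : a ≠ 0) :
    #(traceSolutions F (p ^ k * t) d a) =
      ∑ u ∈ t.divisors, #(traceSolutionsOfDegree F (p ^ k * u) d (((t / u : ℕ) : E)⁻¹ * a)) := by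
  classical
  have hpk : 0 < p ^ k := pow_pos hp.pos k
  rw [card_eq_sum_card_fiberwise (f := fun z => (minpoly F z).natDegree)
    (t := t.divisors.image (p ^ k * ·)), sum_image fun _ _ _ _ h => Nat.eq_of_mul_eq_mul_left hpk h]
  · refine sum_congr rfl fun u hu => congrArg card (ext fun z => ?_)
    have hut : u ∣ t := Nat.dvd_of_mem_divisors hu
    have hw : ((t / u : ℕ) : E) ≠ 0 := by
      rw [Ne, CharP.cast_eq_zero_iff E p]
      exact fun h => hpt (h.trans (Nat.div_dvd_of_dvd hut))
    have hN : p ^ k * t = p ^ k * u * (t / u) := by rw [mul_assoc, Nat.mul_div_cancel' hut]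
    rw [mem_filter, hN]
    constructor
    · rintro ⟨hz, hdeg⟩
      exact (mem_traceSolutions_iff_of_natDegree_minpoly_eq hdeg hw).1 hz
    · intro hz
      have hdeg : (minpoly F z).natDegree = p ^ k * u := by
        simp only [traceSolutionsOfDegree, mem_filter] at hz
        exact hz.2.1
      exact ⟨(mem_traceSolutions_iff_of_natDegree_minpoly_eq hdeg hw).2 hz, hdeg⟩
  · intro z hz
    obtain ⟨u, hut, hdeg⟩ := exists_natDegree_minpoly_eq_of_mem_traceSolutions hp ha hz
    exact mem_image.2 ⟨u, Nat.mem_divisors.2 ⟨hut, fun h => hpt (h ▸ dvd_zero p)⟩, hdeg.symm⟩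

theorem card_traceSolutionsOfDegree_neg (hq : Odd (Fintype.card F)) (hd : Odd d) (n : ℕ) (a : E) :
    #(traceSolutionsOfDegree F n d (-a)) = #(traceSolutionsOfDegree F n d a) :=
  card_equiv (Equiv.neg E) fun z => by
    simp [traceSolutionsOfDegree, minpoly.natDegree_neg, traceSum_neg hq, hd.neg_zpow,
      neg_eq_iff_eq_neg]

theorem card_traceSolutionsOfDegree_natCast_inv_mul {r : ℕ} (hF : Fintype.card F = p ^ r)
    (hp : p = 2 ∨ p = 3) (hd : d = -1 ∨ d = 3 ∧ p = 2) {w : ℕ} (hw : ¬ p ∣ w) (n : ℕ) (a : E) :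
    #(traceSolutionsOfDegree F n d ((w : E)⁻¹ * a)) = #(traceSolutionsOfDegree F n d a) := by
  rcases natCast_eq_one_or_eq_neg_one_of_not_dvd (R := E) hp hw with h | h
  · rw [h, inv_one, one_mul]
  rw [h, inv_neg_one, neg_one_mul]
  rcases hp with rfl | rfl
  · rw [CharTwo.neg_eq]
  · obtain rfl : d = -1 := by omega
    exact card_traceSolutionsOfDegree_neg (by rw [hF]; exact Odd.pow (by decide)) (by decide) n a

end Solutions

theorem moebius_inversion_G_nonzero_general
    (p r k s : ℕ) (hp : p = 2 ∨ p = 3) (hs : 0 < s) (hps : ¬ p ∣ s)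
    (d : ℤ) (hd : d = -1 ∨ (d = 3 ∧ p = 2))
    (F E : Type) [Field F] [Fintype F] [Field E] [Fintype E] [Algebra F E]
    (hF : Fintype.card F = p ^ r)
    (c : F) (hc : c ≠ 0) :
    (Nat.card {z : E // (minpoly F z).natDegree = p ^ k * s ∧
        (∑ i ∈ Finset.range (p ^ k * s), z ^ (p ^ r) ^ i) = 0 ∧
        (∑ i ∈ Finset.range (p ^ k * s), (z ^ d) ^ (p ^ r) ^ i) = algebraMap F E c} : ℤ) =
      ∑ t ∈ s.divisors, (ArithmeticFunction.moebius (s / t)) *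
          (Nat.card {z : E // z ^ (p ^ r) ^ (p ^ k * t) = z ∧
            (∑ i ∈ Finset.range (p ^ k * t), z ^ (p ^ r) ^ i) = 0 ∧
            (∑ i ∈ Finset.range (p ^ k * t), (z ^ d) ^ (p ^ r) ^ i) =
              algebraMap F E c} : ℤ) := by
  have hprime : p.Prime := by rcases hp with rfl | rfl <;> norm_num
  have : Fact p.Prime := ⟨hprime⟩
  have : CharP F p := charP_of_card_eq_prime_pow hF
  have : CharP E p := charP_of_injective_algebraMap (algebraMap F E).injective p
  set a := algebraMap F E c
  have ha : a ≠ 0 := (_root_.map_ne_zero _).2 hc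
  have hsum : ∀ t > 0, t ∈ {t | t ∣ s} → ∑ u ∈ t.divisors,
      (#(traceSolutionsOfDegree F (p ^ k * u) d a) : ℤ) = #(traceSolutions F (p ^ k * t) d a) := by
    intro t _ hts
    rw [card_traceSolutions_eq_sum hprime (fun h => hps (h.trans hts)) ha]
    push_cast
    refine sum_congr rfl fun u hu => ?_
    rw [card_traceSolutionsOfDegree_natCast_inv_mul hF hp hd]
    exact fun h => hps ((h.trans (Nat.div_dvd_of_dvd (Nat.dvd_of_mem_divisors hu))).trans hts)
  have hinv := (ArithmeticFunction.sum_eq_iff_sum_mul_moebius_eq_on _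
    fun _ _ => Nat.dvd_trans).1 hsum s hs dvd_rfl
  simp only [Int.cast_id] at hinv
  rw [Nat.sum_divisorsAntidiagonal'
    (f := fun i j => ArithmeticFunction.moebius i * #(traceSolutions F (p ^ k * j) d a))] at hinv
  classical
  simp only [Nat.card_eq_fintype_card, Fintype.card_subtype, ← hF]
  exact hinv.symm

/-- Let `p ∈ {2,3}`, `q = p^r`, `c ∈ 𝔽_q^*`, and `d = -1` (with the convention `0⁻¹ = 0`)
or `d = 3` with `p = 2`.  Write `m = p^k·s` with `p ∤ s`.  Here `𝔽_{q^n}` (for `n ∣ m`) is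
realized inside `E = 𝔽_{q^m}` as `{z : z^{q^n} = z}`, the relative trace
`tr_n : 𝔽_{q^n} → 𝔽_q` is `z ↦ Σ_{i<n} z^{q^i}`,
`H_{c,d}(n) = #{z ∈ 𝔽_{q^n} : tr_n(z) = 0, tr_n(z^d) = c}`, and `G_{c,d}(m)` counts such
`z` of degree `m` over `𝔽_q`.  Then `G_{c,d}(m) = Σ_{t ∣ s} μ(s/t)·H_{c,d}(p^k t)`. -/
theorem moebius_inversion_G_nonzero
    (p r k s : ℕ) (hp : p = 2 ∨ p = 3) (hr : 0 < r) (hs : 0 < s) (hps : ¬ p ∣ s)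
    (d : ℤ) (hd : d = -1 ∨ (d = 3 ∧ p = 2))
    (F E : Type) [Field F] [Fintype F] [Field E] [Fintype E] [Algebra F E]
    (hF : Fintype.card F = p ^ r) (hE : Fintype.card E = (p ^ r) ^ (p ^ k * s))
    (c : F) (hc : c ≠ 0) :
    (Nat.card {z : E // (minpoly F z).natDegree = p ^ k * s ∧
        (∑ i ∈ Finset.range (p ^ k * s), z ^ (p ^ r) ^ i) = 0 ∧
        (∑ i ∈ Finset.range (p ^ k * s), (z ^ d) ^ (p ^ r) ^ i) = algebraMap F E c} : ℤ) =
      ∑ t ∈ s.divisors, (ArithmeticFunction.moebius (s / t)) *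
          (Nat.card {z : E // z ^ (p ^ r) ^ (p ^ k * t) = z ∧
            (∑ i ∈ Finset.range (p ^ k * t), z ^ (p ^ r) ^ i) = 0 ∧
            (∑ i ∈ Finset.range (p ^ k * t), (z ^ d) ^ (p ^ r) ^ i) =
              algebraMap F E c} : ℤ) :=
  moebius_inversion_G_nonzero_general p r k s hp hs hps d hd F E hF c hc
end

section
/- Let p ∈ {2, 3}, q = p^r, c ∈ 𝔽_q, and m ≥ 2. Then m times the number of monic irreducible polynomials x^m + a_{m−1}x^{m−1} + ⋯ + a_1x + a_0 in 𝔽_q[x] with a_{m−1} = c and a_1 = 0 equals #{z ∈ 𝔽_{q^m} : z has degree m over 𝔽_q, Tr_{𝔽_{q^m}/𝔽_q}(z) = 0, Tr_{𝔽_{q^m}/𝔽_q}(z^{−1}) = c} (i.e., equals G_{c,−1}(m)). -/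
/-!
For `z` of degree `m`, the element `w = -z⁻¹` generates the same field, and the coefficients of
the minimal polynomial of a generator are traces: `a_{m-1} = -Tr w = Tr z⁻¹`, while, since the
minimal polynomial of `w⁻¹ = -z` is the normalised reverse of that of `w`, `a_1` is a nonzero
multiple of `Tr w⁻¹ = -Tr z`. Hence `z ↦ -z⁻¹` maps the set counted by `G_{c,-1}(m)` bijectively
onto the roots in `𝔽_{q^m}` of the polynomials being counted, and each of them has exactly `m`
roots there.
-/

open Polynomial IntermediateField Module

theorem Module.finrank_eq_of_card_eq_pow {K V : Type*} [DivisionRing K] [Fintype K]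
    [AddCommGroup V] [Module K V] [Fintype V] {m : ℕ}
    (h : Fintype.card V = Fintype.card K ^ m) : finrank K V = m :=
  Nat.pow_right_injective Fintype.one_lt_card (card_eq_pow_finrank.symm.trans h)

section MinpolyFibres

variable {F E : Type*} [Field F] [Field E] [Algebra F E]

theorem minpoly_eq_iff_mem_aroots {f : F[X]} (hmon : f.Monic) (hirr : Irreducible f) (w : E) :
    minpoly F w = f ↔ w ∈ f.aroots E := by
  rw [mem_aroots, and_iff_right hmon.ne_zero]
  exact ⟨fun h => h ▸ minpoly.aeval F w,
    fun h => (minpoly.eq_of_irreducible_of_monic hirr h hmon).symm⟩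

variable [Finite E]

theorem natCard_minpoly_eq {f : F[X]} (hmon : f.Monic) (hirr : Irreducible f)
    (hdvd : f.natDegree ∣ finrank F E) : Nat.card {w : E // minpoly F w = f} = f.natDegree := by
  have := Fact.mk hirr
  have hfin : finrank F (AdjoinRoot f) = f.natDegree :=
    (AdjoinRoot.powerBasis hmon.ne_zero).finrank
  rw [Nat.card_congr (Equiv.subtypeEquivRight (minpoly_eq_iff_mem_aroots hmon hirr)),
    ← Nat.card_congr (AdjoinRoot.equiv E F f hmon.ne_zero), ← hfin]
  exact FiniteField.natCard_algHom_of_finrank_dvd (hfin ▸ hdvd)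

theorem natCard_minpoly_mem_eq_mul {S : Set F[X]}
    (hS : ∀ f ∈ S, f.Monic ∧ Irreducible f ∧ f.natDegree = finrank F E) :
    Nat.card {w : E // minpoly F w ∈ S} = finrank F E * Nat.card S := by
  have hfibre (f : S) : Nat.card {w : E // minpoly F w = f} = finrank F E := by
    obtain ⟨hmon, hirr, hdeg⟩ := hS f f.2
    rw [natCard_minpoly_eq hmon hirr (hdeg ▸ dvd_rfl), hdeg]
  have : Finite S := by
    refine Set.Finite.to_subtype ((Set.finite_range (minpoly F : E → F[X])).subset fun f hf => ?_)
    have hpos : 0 < Nat.card {w : E // minpoly F w = f} := by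
      rw [hfibre ⟨f, hf⟩]; exact finrank_pos
    obtain ⟨w, hw⟩ := (Nat.card_pos_iff.mp hpos).1
    exact ⟨w, hw⟩
  have := Fintype.ofFinite S
  rw [← Nat.card_congr (Equiv.sigmaSubtypeFiberEquivSubtype (minpoly F) fun _ => Iff.rfl),
    Nat.card_sigma, Finset.sum_congr rfl fun f _ => hfibre f, Finset.sum_const, Finset.card_univ,
    smul_eq_mul, Nat.card_eq_fintype_card, mul_comm]

end MinpolyFibres

section MinpolyCoeff

variable {F E : Type*} [Field F] [Field E] [Algebra F E]

theorem IntermediateField.adjoin_simple_inv (z : E) : F⟮z⁻¹⟯ = F⟮z⟯ :=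
  le_antisymm (adjoin_simple_le_iff.mpr (inv_mem (mem_adjoin_simple_self F z)))
    (adjoin_simple_le_iff.mpr (by simpa using inv_mem (mem_adjoin_simple_self F z⁻¹)))

theorem IntermediateField.adjoin_simple_neg (z : E) : F⟮-z⟯ = F⟮z⟯ :=
  le_antisymm (adjoin_simple_le_iff.mpr (neg_mem (mem_adjoin_simple_self F z)))
    (adjoin_simple_le_iff.mpr (by simpa using neg_mem (mem_adjoin_simple_self F (-z))))

theorem natDegree_minpoly_inv {z : E} (hz : IsIntegral F z) :
    (minpoly F z⁻¹).natDegree = (minpoly F z).natDegree := by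
  rw [← adjoin.finrank hz, ← adjoin.finrank hz.inv, adjoin_simple_inv]

theorem natDegree_minpoly_neg {z : E} (hz : IsIntegral F z) :
    (minpoly F (-z)).natDegree = (minpoly F z).natDegree := by
  rw [← adjoin.finrank hz, ← adjoin.finrank hz.neg, adjoin_simple_neg]

theorem minpoly_inv_eq_C_mul_reverse {z : E} (hz : IsIntegral F z) (hz0 : z ≠ 0) :
    minpoly F z⁻¹ = C ((minpoly F z).coeff 0)⁻¹ * (minpoly F z).reverse := by
  set f := minpoly F z
  have hf0 : f.coeff 0 ≠ 0 := minpoly.coeff_zero_ne_zero hz hz0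
  have htrail : f.natTrailingDegree = 0 := natTrailingDegree_eq_zero.mpr (Or.inr hf0)
  have hmonic : (C (f.coeff 0)⁻¹ * f.reverse).Monic := by
    rw [Monic, leadingCoeff_mul, leadingCoeff_C, reverse_leadingCoeff, trailingCoeff, htrail,
      inv_mul_cancel₀ hf0]
  have hroot : aeval z⁻¹ (C (f.coeff 0)⁻¹ * f.reverse) = 0 := by
    have := invertibleOfNonzero hz0
    have hrev : aeval z⁻¹ f.reverse = 0 := by
      rw [aeval_def, ← invOf_eq_inv, eval₂_reverse_eq_zero_iff, ← aeval_def, minpoly.aeval]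
    rw [map_mul, hrev, mul_zero]
  refine (eq_of_monic_of_dvd_of_natDegree_le (minpoly.monic hz.inv) hmonic
    (minpoly.dvd F _ hroot) ?_).symm
  rw [natDegree_C_mul (inv_ne_zero hf0), reverse_natDegree, htrail, natDegree_minpoly_inv hz]
  exact Nat.sub_le _ _

variable [FiniteDimensional F E]

theorem trace_eq_neg_nextCoeff_minpoly {w : E} (hw : (minpoly F w).natDegree = finrank F E) :
    Algebra.trace F E w = -(minpoly F w).nextCoeff := by
  have h : finrank F⟮w⟯ E = 1 := by
    rw [(Field.primitive_element_iff_minpoly_natDegree_eq F w).mpr hw,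
      IntermediateField.finrank_top]
  rw [trace_eq_finrank_mul_minpoly_nextCoeff, h, Nat.cast_one, one_mul]

theorem minpoly_coeff_finrank_sub_one {w : E} (hw : (minpoly F w).natDegree = finrank F E) :
    (minpoly F w).coeff (finrank F E - 1) = -Algebra.trace F E w := by
  rw [trace_eq_neg_nextCoeff_minpoly hw, neg_neg, nextCoeff_of_natDegree_pos (hw ▸ finrank_pos),
    hw]

theorem minpoly_coeff_one {w : E} (hw : (minpoly F w).natDegree = finrank F E) (hw0 : w ≠ 0) :
    (minpoly F w).coeff 1 = ((minpoly F w⁻¹).coeff 0)⁻¹ * -Algebra.trace F E w⁻¹ := by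
  have hinv := minpoly_inv_eq_C_mul_reverse (IsIntegral.of_finite F w⁻¹) (inv_ne_zero hw0)
  rw [inv_inv] at hinv
  rw [hinv, coeff_C_mul, coeff_one_reverse, trace_eq_neg_nextCoeff_minpoly
    (by rwa [natDegree_minpoly_inv (.of_finite F w)]), neg_neg]

theorem trace_conditions_iff_minpoly_neg_inv_coeff (hn : 1 < finrank F E) (z : E) (c : F) :
    ((minpoly F z).natDegree = finrank F E ∧ Algebra.trace F E z = 0 ∧
        Algebra.trace F E z⁻¹ = c) ↔
      (minpoly F (-z⁻¹)).natDegree = finrank F E ∧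
        (minpoly F (-z⁻¹)).coeff (finrank F E - 1) = c ∧ (minpoly F (-z⁻¹)).coeff 1 = 0 := by
  have hdeg : (minpoly F (-z⁻¹)).natDegree = (minpoly F z).natDegree := by
    rw [natDegree_minpoly_neg (.of_finite F _), natDegree_minpoly_inv (.of_finite F _)]
  rw [hdeg]
  refine and_congr_right fun hz => ?_
  have hz0 : z ≠ 0 := by
    rintro rfl
    rw [minpoly.zero, natDegree_X] at hz
    omega
  have hw : (minpoly F (-z⁻¹)).natDegree = finrank F E := hdeg.trans hz
  rw [minpoly_coeff_finrank_sub_one hw, minpoly_coeff_one hw (by simpa using hz0), inv_neg,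
    inv_inv, map_neg, map_neg, neg_neg, neg_neg, mul_eq_zero, inv_eq_zero,
    or_iff_right (minpoly.coeff_zero_ne_zero (.of_finite F _) (neg_ne_zero.mpr hz0))]
  exact and_comm

end MinpolyCoeff

theorem irreducible_count_eq_G_kloosterman_general
    (p r m : ℕ) (hm : 2 ≤ m)
    (F E : Type) [Field F] [Fintype F] [Field E] [Fintype E] [Algebra F E]
    (hF : Fintype.card F = p ^ r) (hE : Fintype.card E = (p ^ r) ^ m)
    (c : F) :
    m * Nat.card {f : Polynomial F // f.Monic ∧ Irreducible f ∧ f.natDegree = m ∧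
        f.coeff (m - 1) = c ∧ f.coeff 1 = 0} =
      Nat.card {z : E // (minpoly F z).natDegree = m ∧ Algebra.trace F E z = 0 ∧
        Algebra.trace F E z⁻¹ = c} := by
  obtain rfl : finrank F E = m := finrank_eq_of_card_eq_pow (by rw [hE, hF])
  let S : Set F[X] := {f | f.Monic ∧ Irreducible f ∧ f.natDegree = finrank F E ∧
    f.coeff (finrank F E - 1) = c ∧ f.coeff 1 = 0}
  refine (natCard_minpoly_mem_eq_mul (S := S) fun f hf => ⟨hf.1, hf.2.1, hf.2.2.1⟩).symm.trans
    (Nat.card_congr (((Equiv.inv E).trans (Equiv.neg E)).subtypeEquiv fun z => ?_).symm)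
  have hw : IsIntegral F (-z⁻¹) := .of_finite F _
  rw [trace_conditions_iff_minpoly_neg_inv_coeff hm]
  exact ⟨fun h => ⟨minpoly.monic hw, minpoly.irreducible hw, h⟩, fun h => h.2.2⟩

/-- Let `p ∈ {2,3}`, `q = p^r`, `c ∈ 𝔽_q`, and `m ≥ 2`.  Then `m` times the number of monic
irreducible polynomials `x^m + a_{m-1}x^{m-1} + ⋯ + a_0 ∈ 𝔽_q[x]` with `a_{m-1} = c` and
`a_1 = 0` equals
`#{z ∈ 𝔽_{q^m} : z has degree m over 𝔽_q, Tr_{𝔽_{q^m}/𝔽_q}(z) = 0, Tr_{𝔽_{q^m}/𝔽_q}(z⁻¹) = c}`. -/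
theorem irreducible_count_eq_G_kloosterman
    (p r m : ℕ) (hp : p = 2 ∨ p = 3) (hr : 0 < r) (hm : 2 ≤ m)
    (F E : Type) [Field F] [Fintype F] [Field E] [Fintype E] [Algebra F E]
    (hF : Fintype.card F = p ^ r) (hE : Fintype.card E = (p ^ r) ^ m)
    (c : F) :
    m * Nat.card {f : Polynomial F // f.Monic ∧ Irreducible f ∧ f.natDegree = m ∧
        f.coeff (m - 1) = c ∧ f.coeff 1 = 0} =
      Nat.card {z : E // (minpoly F z).natDegree = m ∧ Algebra.trace F E z = 0 ∧
        Algebra.trace F E z⁻¹ = c} :=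
  irreducible_count_eq_G_kloosterman_general p r m hm F E hF hE c
end
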